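/- Let φ : Q6 × Q6 → ℤ/4ℤ be the specific quandle 2-cocycle defined by the table (with e1 = (1234), e2 = (1423), e3 = (1342), e4 = (1432), e5 = (1324), e6 = (1243)): φ(a,a) = 0 and φ(a,a⁻¹) = 1 for all a; φ(e1,e3) = φ(e2,e1) = φ(e2,e3) = φ(e3,e1) = φ(e3,e5) = φ(e5,e1) = φ(e5,e6) = φ(e6,e1) = φ(e6,e2) = φ(e6,e5) = 1; φ(e1,e5) = φ(e5,e3) = 2; φ(e1,e6) = φ(e3,e2) = 3; φ(a,b) = 0 otherwise. Let l be a natural number with l ≡ 3 (mod 6), and let a, b be 4-cycles in S₄ with b ≠ a and b ≠ a⁻¹. Then the total weight of the corresponding Q6-coloring of the (2,l)-torus braid, namely the sum over i = 0, 1, …, l−1 of φ applied to the i-th iterate of the half-twist map f(x,y) = (y, y⁻¹xy) starting from (a,b), equals l + 2 in ℤ/4ℤ. -/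

import Mathlib

/-!
If `b ≠ a, a⁻¹` are 4-cycles, the half-twist orbit of `(a, b)` has period 3 and the
three crossings of one period have total weight 1 (a finite check over the 24 such
pairs). Writing `l = 3m`, the weight of `T(2,l)` is therefore `m`, and `m` is odd,
so `m ≡ 3m + 2 (mod 4)`.
-/

/-- A permutation of four letters is a 4-cycle iff its cycle type is a single
cycle of length 4. -/
def IsFourCycle (a : Equiv.Perm (Fin 4)) : Prop := a.cycleType = {4}

/- The six 4-cycles of `S₄`, acting on `Fin 4 = {0,1,2,3}` (the letters `1,2,3,4`
of the paper correspond to `0,1,2,3`). -/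
/-- `e1 = (1234)` -/
def e1 : Equiv.Perm (Fin 4) := c[0, 1, 2, 3]
/-- `e2 = (1423)` -/
def e2 : Equiv.Perm (Fin 4) := c[0, 3, 1, 2]
/-- `e3 = (1342)` -/
def e3 : Equiv.Perm (Fin 4) := c[0, 2, 3, 1]
/-- `e4 = (1432)` -/
def e4 : Equiv.Perm (Fin 4) := c[0, 3, 2, 1]
/-- `e5 = (1324)` -/
def e5 : Equiv.Perm (Fin 4) := c[0, 2, 1, 3]
/-- `e6 = (1243)` -/
def e6 : Equiv.Perm (Fin 4) := c[0, 1, 3, 2]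

/-- The specific quandle 2-cocycle `φ : Q6 × Q6 → ℤ/4ℤ` given by the table:
`φ(a,a) = 0` and `φ(a,a⁻¹) = 1` for every `a ∈ Q6`;
`φ(e1,e3) = φ(e2,e1) = φ(e2,e3) = φ(e3,e1) = φ(e3,e5) = φ(e5,e1) = φ(e5,e6)
  = φ(e6,e1) = φ(e6,e2) = φ(e6,e5) = 1`;
`φ(e1,e5) = φ(e5,e3) = 2`; `φ(e1,e6) = φ(e3,e2) = 3`; and `φ(a,b) = 0` otherwise. -/
def phi (a b : Equiv.Perm (Fin 4)) : ZMod 4 :=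
  if a = b then 0
  else if b = a⁻¹ then 1
  else if (a, b) = (e1, e3) ∨ (a, b) = (e2, e1) ∨ (a, b) = (e2, e3) ∨
          (a, b) = (e3, e1) ∨ (a, b) = (e3, e5) ∨ (a, b) = (e5, e1) ∨
          (a, b) = (e5, e6) ∨ (a, b) = (e6, e1) ∨ (a, b) = (e6, e2) ∨
          (a, b) = (e6, e5) then 1
  else if (a, b) = (e1, e5) ∨ (a, b) = (e5, e3) then 2
  else if (a, b) = (e1, e6) ∨ (a, b) = (e3, e2) then 3
  else 0

/-- The quandle operation `a * b = b⁻¹ab` of the paper.  The paper composes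
permutations left-to-right (it computes `(1342)*(1234) = (1324)`), so its
conjugation `b⁻¹ab` is `b * a * b⁻¹` in Mathlib's right-to-left composition
convention for `Equiv.Perm`. -/
def quandleOp (a b : Equiv.Perm (Fin 4)) : Equiv.Perm (Fin 4) := b * a * b⁻¹

/-- The half-twist map `f(x,y) = (y, y⁻¹xy) = (y, x*y)`, describing how the colors
of the two strands of a braid change under one positive half twist.  The
conjugation `y⁻¹xy` is written in the paper's left-to-right composition
convention, i.e. it is `quandleOp x y = y * x * y⁻¹` in Mathlib's convention. -/
def halfTwist (p : Equiv.Perm (Fin 4) × Equiv.Perm (Fin 4)) :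
    Equiv.Perm (Fin 4) × Equiv.Perm (Fin 4) :=
  (p.2, quandleOp p.1 p.2)

open Function Finset

def Q6 : Finset (Equiv.Perm (Fin 4)) := {e1, e2, e3, e4, e5, e6}

set_option maxRecDepth 20000 in
theorem isFourCycle_iff_mem_Q6 (a : Equiv.Perm (Fin 4)) : IsFourCycle a ↔ a ∈ Q6 := by
  unfold IsFourCycle
  revert a
  decide

set_option maxRecDepth 20000 in
theorem isPeriodicPt_halfTwist_three :
    ∀ a ∈ Q6, ∀ b ∈ Q6, b ≠ a → b ≠ a⁻¹ → IsPeriodicPt halfTwist 3 (a, b) := by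
  decide

set_option maxRecDepth 20000 in
theorem sum_range_three_phi_halfTwist :
    ∀ a ∈ Q6, ∀ b ∈ Q6, b ≠ a → b ≠ a⁻¹ →
      ∑ i ∈ range 3, phi (halfTwist^[i] (a, b)).1 (halfTwist^[i] (a, b)).2 = 1 := by
  decide

theorem Function.IsPeriodicPt.sum_range_mul {α M : Type*} [AddCommMonoid M] {f : α → α}
    {n : ℕ} {x : α} (h : IsPeriodicPt f n x) (g : α → M) (m : ℕ) :
    ∑ i ∈ range (n * m), g (f^[i] x) = m • ∑ i ∈ range n, g (f^[i] x) := by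
  induction m with
  | zero => simp
  | succ m ih =>
    have hshift (i : ℕ) : f^[n * m + i] x = f^[i] x := by
      rw [add_comm, iterate_add_apply, (h.mul_const m).eq]
    simp only [Nat.mul_succ, sum_range_add, ih, hshift, succ_nsmul]

/-- Let `l ≡ 3 (mod 6)` and let `a, b` be 4-cycles in `S₄` with `b ≠ a` and
`b ≠ a⁻¹`.  Then the total weight of the corresponding `Q6`-coloring of the
`(2,l)`-torus braid, namely the sum over `i = 0, 1, …, l−1` of `φ` applied to the
`i`-th iterate of the half-twist map starting from `(a,b)`, equals `l + 2` in
`ℤ/4ℤ`. -/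
theorem stmt_10 (l : ℕ) (hl : l % 6 = 3) (a b : Equiv.Perm (Fin 4))
    (ha : IsFourCycle a) (hb : IsFourCycle b) (hba : b ≠ a) (hbi : b ≠ a⁻¹) :
    ∑ i ∈ Finset.range l, phi (halfTwist^[i] (a, b)).1 (halfTwist^[i] (a, b)).2
      = (l : ZMod 4) + 2 := by
  rw [isFourCycle_iff_mem_Q6] at ha hb
  obtain ⟨m, rfl⟩ : ∃ m, l = 3 * m := ⟨l / 3, by omega⟩
  rw [(isPeriodicPt_halfTwist_three a ha b hb hba hbi).sum_range_mul
      (fun p => phi p.1 p.2), sum_range_three_phi_halfTwist a ha b hb hba hbi, nsmul_one]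
  exact_mod_cast (ZMod.natCast_eq_natCast_iff' _ _ 4).mpr (by omega)
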